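/- Let γ, p ∈ ℝ satisfy 0 ≤ γ + 2p < 1, and let W : ℝ → ℝ be locally bounded and measurable with W(Y) = W(−Y) and |W(Y)| ≤ C·e^{(γ/2+p)|Y|} for all Y ∈ ℝ. Then for every k ∈ ℝ and every X ∈ ℝ: B(1, e^{ik·}; W)(X) + B(e^{ik·}, 1; W)(X) = Ψ(k;W)·e^{ikX}, where Ψ(k;W) := ∫_{−∞}^0 ∫_{log(1−e^Y)}^{∞} e^{(Y−Z)/2} W(Y−Z)·(e^{ikY}+e^{ikZ}) dZ dY, and this double integral is absolutely convergent. -/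

import Mathlib

open MeasureTheory Real Set

/-- The bilinear coagulation flux operator on complex-valued functions:
`B(H₁,H₂;W)(X) = ∫_{−∞}^X ∫_{X+log(1−e^{Y−X})}^{∞} e^{(Y−Z)/2} W(Y−Z) H₁(Y) H₂(Z) dZ dY`. -/
noncomputable def coagBc (W : ℝ → ℝ) (H₁ H₂ : ℝ → ℂ) (X : ℝ) : ℂ :=
  ∫ Y in Set.Iio X, ∫ Z in Set.Ioi (X + Real.log (1 - Real.exp (Y - X))),
    ((Real.exp ((Y - Z) / 2) * W (Y - Z) : ℝ) : ℂ) * H₁ Y * H₂ Z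

/-- The eigenvalue `Ψ(k;W) = ∫_{−∞}^0 ∫_{log(1−e^Y)}^{∞}
e^{(Y−Z)/2} W(Y−Z) (e^{ikY}+e^{ikZ}) dZ dY` of the linearized operator. -/
noncomputable def coagPsi (W : ℝ → ℝ) (k : ℝ) : ℂ :=
  ∫ Y in Set.Iio (0 : ℝ), ∫ Z in Set.Ioi (Real.log (1 - Real.exp Y)),
    ((Real.exp ((Y - Z) / 2) * W (Y - Z) : ℝ) : ℂ) *
      (Complex.exp (Complex.I * (k : ℂ) * (Y : ℂ)) +
        Complex.exp (Complex.I * (k : ℂ) * (Z : ℂ)))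

lemma helper_exp_intOn (β Y L : ℝ) (hβ : 0 < β) :
    IntegrableOn (fun Z => Real.exp (β * (Y - Z))) (Ioi L) := by
  have h := (exp_neg_integrableOn_Ioi L hβ).const_mul (Real.exp (β * Y))
  refine (IntegrableOn.congr_fun h (fun Z _ => ?_) measurableSet_Ioi)
  rw [← Real.exp_add]; ring_nf

lemma helper_exp_integral (β Y L : ℝ) (hβ : 0 < β) :
    ∫ Z in Ioi L, Real.exp (β * (Y - Z)) = Real.exp (β * (Y - L)) / β := by
  have h1 : ∀ Z : ℝ, Real.exp (β * (Y - Z)) = Real.exp (β * Y) * Real.exp (-(β * Z)) := by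
    intro Z; rw [← Real.exp_add]; ring_nf
  simp_rw [h1]
  rw [integral_const_mul]
  have h2 : (∫ Z in Ioi L, Real.exp (-(β * Z))) = β⁻¹ * Real.exp (-(β * L)) := by
    have := integral_comp_mul_left_Ioi (fun x => Real.exp (-x)) L hβ
    simp only [smul_eq_mul] at this
    rw [this, integral_exp_neg_Ioi]
  rw [h2]; ring

-- integrability and value of the dominating function D

lemma helper_D (C β₁ β₂ Y L : ℝ) (hβ₁ : 0 < β₁) (hβ₂ : 0 < β₂) :
    IntegrableOn (fun Z => C * Real.exp (β₁ * (Y - Z)) + C * Real.exp (β₂ * (Y - Z))) (Ioi L) ∧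
    (∫ Z in Ioi L, (C * Real.exp (β₁ * (Y - Z)) + C * Real.exp (β₂ * (Y - Z))))
      = C / β₁ * Real.exp (β₁ * (Y - L)) + C / β₂ * Real.exp (β₂ * (Y - L)) := by
  have h1 := (helper_exp_intOn β₁ Y L hβ₁).const_mul C
  have h2 := (helper_exp_intOn β₂ Y L hβ₂).const_mul C
  refine ⟨h1.add h2, ?_⟩
  rw [integral_add h1 h2, integral_const_mul, integral_const_mul,
    helper_exp_integral β₁ Y L hβ₁, helper_exp_integral β₂ Y L hβ₂]
  ring

lemma helper_normf (W : ℝ → ℝ) (C β₁ β₂ : ℝ)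
    (hWb : ∀ u : ℝ, Real.exp (u / 2) * |W u| ≤ C * Real.exp (β₁ * u) + C * Real.exp (β₂ * u))
    (Y Z : ℝ) :
    ‖((Real.exp ((Y - Z) / 2) * W (Y - Z) : ℝ) : ℂ)‖ ≤
      C * Real.exp (β₁ * (Y - Z)) + C * Real.exp (β₂ * (Y - Z)) := by
  rw [Complex.norm_real, Real.norm_eq_abs, abs_mul, abs_of_pos (Real.exp_pos _)]
  exact hWb (Y - Z)

lemma helper_inner (W : ℝ → ℝ) (hWmeas : Measurable W) (C β₁ β₂ : ℝ)
    (hβ₁ : 0 < β₁) (hβ₂ : 0 < β₂)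
    (hWb : ∀ u : ℝ, Real.exp (u / 2) * |W u| ≤ C * Real.exp (β₁ * u) + C * Real.exp (β₂ * u))
    (φ : ℝ → ℂ) (hφ : Measurable φ) (M : ℝ) (hφM : ∀ Z, ‖φ Z‖ ≤ M)
    (Y L : ℝ) :
    IntegrableOn (fun Z => ((Real.exp ((Y - Z) / 2) * W (Y - Z) : ℝ) : ℂ) * φ Z) (Ioi L) ∧
    ‖∫ Z in Ioi L, ((Real.exp ((Y - Z) / 2) * W (Y - Z) : ℝ) : ℂ) * φ Z‖ ≤
      M * (C / β₁ * Real.exp (β₁ * (Y - L)) + C / β₂ * Real.exp (β₂ * (Y - L))) := by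
  have hM : 0 ≤ M := le_trans (norm_nonneg _) (hφM 0)
  obtain ⟨hD, hDval⟩ := helper_D C β₁ β₂ Y L hβ₁ hβ₂
  have hMD := hD.const_mul M
  have hmeas : Measurable fun Z =>
      ((Real.exp ((Y - Z) / 2) * W (Y - Z) : ℝ) : ℂ) * φ Z := by
    refine Measurable.mul (Complex.measurable_ofReal.comp ?_) hφ
    exact (Real.measurable_exp.comp ((measurable_const.sub measurable_id).div_const 2)).mul
      (hWmeas.comp (measurable_const.sub measurable_id))
  have hnorm : ∀ Z, ‖((Real.exp ((Y - Z) / 2) * W (Y - Z) : ℝ) : ℂ) * φ Z‖ ≤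
      M * (C * Real.exp (β₁ * (Y - Z)) + C * Real.exp (β₂ * (Y - Z))) := by
    intro Z
    rw [norm_mul, mul_comm M]
    exact mul_le_mul (helper_normf W C β₁ β₂ hWb Y Z) (hφM Z) (norm_nonneg _)
      (le_trans (norm_nonneg _) (helper_normf W C β₁ β₂ hWb Y Z))
  have hint : IntegrableOn (fun Z =>
      ((Real.exp ((Y - Z) / 2) * W (Y - Z) : ℝ) : ℂ) * φ Z) (Ioi L) :=
    Integrable.mono' hMD hmeas.aestronglyMeasurable
      (Filter.Eventually.of_forall hnorm)
  refine ⟨hint, ?_⟩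
  have := norm_integral_le_of_norm_le hMD (Filter.Eventually.of_forall hnorm)
  rw [integral_const_mul, hDval] at this
  exact this

lemma helper_meas (W : ℝ → ℝ) (hWmeas : Measurable W) (φ : ℝ × ℝ → ℂ)
    (hφ : Measurable φ) :
    StronglyMeasurable fun Y => ∫ Z in Ioi (Real.log (1 - Real.exp Y)),
      ((Real.exp ((Y - Z) / 2) * W (Y - Z) : ℝ) : ℂ) * φ (Y, Z) := by
  set F : ℝ × ℝ → ℂ := fun q =>
    if Real.log (1 - Real.exp q.1) < q.2 then
      ((Real.exp ((q.1 - q.2) / 2) * W (q.1 - q.2) : ℝ) : ℂ) * φ q else 0 with hF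
  have hFmeas : Measurable F := by
    refine Measurable.ite ?_ ?_ measurable_const
    · exact measurableSet_lt ((Real.measurable_log.comp
        (measurable_const.sub Real.measurable_exp)).comp measurable_fst) measurable_snd
    · refine Measurable.mul (Complex.measurable_ofReal.comp ?_) hφ
      exact (Real.measurable_exp.comp ((measurable_fst.sub measurable_snd).div_const 2)).mul
        (hWmeas.comp (measurable_fst.sub measurable_snd))
  have h := hFmeas.stronglyMeasurable.integral_prod_right' (ν := volume)
  have heq : (fun Y => ∫ Z in Ioi (Real.log (1 - Real.exp Y)),
      ((Real.exp ((Y - Z) / 2) * W (Y - Z) : ℝ) : ℂ) * φ (Y, Z))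
      = fun Y => ∫ Z, F (Y, Z) := by
    funext Y
    rw [← integral_indicator measurableSet_Ioi]
    simp only [hF, indicator_apply, mem_Ioi]
  rw [heq]
  exact h

lemma helper_shift_Ioi (f : ℝ → ℂ) (c X : ℝ) :
    ∫ x in Ioi c, f x = ∫ x in Ioi (c - X), f (x + X) := by
  have h1 : MeasurePreserving (fun x : ℝ => x + X) volume volume :=
    measurePreserving_add_right volume X
  have h2 : MeasurableEmbedding (fun x : ℝ => x + X) :=
    (Homeomorph.addRight X).isClosedEmbedding.measurableEmbedding
  rw [← h1.setIntegral_preimage_emb h2 f (Ioi c), preimage_add_const_Ioi]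

lemma helper_shift_Iio (f : ℝ → ℂ) (c X : ℝ) :
    ∫ x in Iio c, f x = ∫ x in Iio (c - X), f (x + X) := by
  have h1 : MeasurePreserving (fun x : ℝ => x + X) volume volume :=
    measurePreserving_add_right volume X
  have h2 : MeasurableEmbedding (fun x : ℝ => x + X) :=
    (Homeomorph.addRight X).isClosedEmbedding.measurableEmbedding
  rw [← h1.setIntegral_preimage_emb h2 f (Iio c), preimage_add_const_Iio]

lemma helper_exp_intOn_Iio (β a : ℝ) (hβ : 0 < β) :
    IntegrableOn (fun Y => Real.exp (β * Y)) (Iio a) := by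
  have h := ((exp_neg_integrableOn_Ioi (-a) hβ).integrable_indicator measurableSet_Ioi).comp_neg
  refine (integrable_indicator_iff measurableSet_Iio).mp
    (h.congr (Filter.Eventually.of_forall fun x => ?_))
  simp only [indicator_apply, mem_Ioi, mem_Iio, neg_lt_neg_iff]
  by_cases hx : x < a
  · rw [if_pos hx, if_pos hx]; ring_nf
  · rw [if_neg hx, if_neg hx]

lemma helper_g_intOn (β : ℝ) (hβ0 : 0 < β) (hβ1 : β < 1) :
    IntegrableOn (fun Y => Real.exp (β * (Y - Real.log (1 - Real.exp Y)))) (Iio 0) := by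
  set a : ℝ := -Real.log 2 with ha
  have ha0 : a < 0 := by
    rw [ha, neg_lt, neg_zero]; exact Real.log_pos (by norm_num)
  have hmeas : Measurable fun Y : ℝ => Real.exp (β * (Y - Real.log (1 - Real.exp Y))) := by
    exact Real.measurable_exp.comp <| measurable_const.mul <|
      measurable_id.sub <| Real.measurable_log.comp <| measurable_const.sub Real.measurable_exp
  have h1 : IntegrableOn (fun Y => Real.exp (β * (Y - Real.log (1 - Real.exp Y)))) (Iio a) := by
    refine Integrable.mono' ((helper_exp_intOn_Iio β a hβ0).const_mul (Real.exp (β * Real.log 2)))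
      hmeas.aestronglyMeasurable ?_
    refine (ae_restrict_iff' measurableSet_Iio).2 (Filter.Eventually.of_forall fun Y hY => ?_)
    rw [Real.norm_eq_abs, abs_of_pos (Real.exp_pos _), ← Real.exp_add]
    refine Real.exp_le_exp.2 ?_
    have hY2 : Real.exp Y ≤ 1 / 2 := by
      rw [show (1:ℝ)/2 = Real.exp (-Real.log 2) by
        rw [Real.exp_neg, Real.exp_log]; norm_num; norm_num]
      exact Real.exp_le_exp.2 (le_of_lt hY)
    have hlog : -Real.log 2 ≤ Real.log (1 - Real.exp Y) := by
      rw [show -Real.log 2 = Real.log (1/2) by rw [← Real.log_inv]; norm_num]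
      exact Real.log_le_log (by norm_num) (by linarith)
    nlinarith [hβ0.le]
  have h2 : IntegrableOn (fun Y => Real.exp (β * (Y - Real.log (1 - Real.exp Y)))) (Ico a 0) := by
    have hint : IntegrableOn (fun Y : ℝ => (-Y) ^ (-β)) (Ico a 0) := by
      have h3 : IntervalIntegrable (fun x : ℝ => x ^ (-β)) volume 0 (-a) :=
        intervalIntegral.intervalIntegrable_rpow' (by linarith)
      have h4 : IntervalIntegrable (fun x : ℝ => (-x) ^ (-β)) volume (-0) a := by
        simpa using (IntervalIntegrable.iff_comp_neg (f := fun x : ℝ => x ^ (-β)) (a := 0) (b := -a)).1 h3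
      rw [show (-0 : ℝ) = 0 by norm_num] at h4
      exact (intervalIntegrable_iff_integrableOn_Ico_of_le ha0.le).1 h4.symm
    refine Integrable.mono' hint hmeas.aestronglyMeasurable ?_
    refine (ae_restrict_iff' measurableSet_Ico).2 (Filter.Eventually.of_forall fun Y hY => ?_)
    have hY0 : Y < 0 := hY.2
    have he1 : Real.exp Y < 1 := by
      rw [← Real.exp_zero]; exact Real.exp_lt_exp.2 hY0
    have hpos : 0 < 1 - Real.exp Y := by linarith
    have hkey : -Y * Real.exp Y ≤ 1 - Real.exp Y := by
      have h5 := Real.add_one_le_exp (-Y)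
      have h6 : Real.exp (-Y) * Real.exp Y = 1 := by
        rw [← Real.exp_add]; simp
      nlinarith [mul_le_mul_of_nonneg_right h5 (Real.exp_pos Y).le]
    have hNYpos : 0 < -Y * Real.exp Y :=
      mul_pos (by linarith) (Real.exp_pos Y)
    rw [Real.norm_eq_abs, abs_of_pos (Real.exp_pos _)]
    have e1 : Real.exp (β * (Y - Real.log (1 - Real.exp Y)))
        = Real.exp (β * Y) * (1 - Real.exp Y) ^ (-β) := by
      rw [Real.rpow_def_of_pos hpos, ← Real.exp_add]
      ring_nf
    rw [e1]
    have e2 : (1 - Real.exp Y) ^ (-β) ≤ (-Y * Real.exp Y) ^ (-β) :=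
      Real.rpow_le_rpow_of_nonpos hNYpos hkey (by linarith)
    have e3 : (-Y * Real.exp Y) ^ (-β) = (-Y) ^ (-β) * Real.exp (-β * Y) := by
      rw [Real.mul_rpow (by linarith) (Real.exp_pos Y).le,
        Real.rpow_def_of_pos (Real.exp_pos Y), Real.log_exp]
      ring_nf
    calc Real.exp (β * Y) * (1 - Real.exp Y) ^ (-β)
        ≤ Real.exp (β * Y) * ((-Y) ^ (-β) * Real.exp (-β * Y)) :=
          mul_le_mul_of_nonneg_left (e2.trans_eq e3) (Real.exp_pos _).le
      _ = (-Y) ^ (-β) * (Real.exp (β * Y) * Real.exp (-β * Y)) := by ring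
      _ = (-Y) ^ (-β) := by
          rw [← Real.exp_add, show β * Y + -β * Y = 0 by ring, Real.exp_zero, mul_one]
  have := h1.union h2
  rwa [Iio_union_Ico_eq_Iio ha0.le] at this

lemma helper_coagBc_shift (W : ℝ → ℝ) (H₁ H₂ : ℝ → ℂ) (X : ℝ) :
    coagBc W H₁ H₂ X = ∫ Y in Iio (0:ℝ), ∫ Z in Ioi (Real.log (1 - Real.exp Y)),
      ((Real.exp ((Y - Z) / 2) * W (Y - Z) : ℝ) : ℂ) * H₁ (Y + X) * H₂ (Z + X) := by
  unfold coagBc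
  rw [helper_shift_Iio _ X X, sub_self]
  refine setIntegral_congr_fun measurableSet_Iio fun Y _ => ?_
  rw [add_sub_cancel_right,
    helper_shift_Ioi _ (X + Real.log (1 - Real.exp Y)) X, add_sub_cancel_left]
  refine setIntegral_congr_fun measurableSet_Ioi fun Z _ => ?_
  rw [add_sub_add_right_eq_sub]

lemma helper_norm_cexp (k t : ℝ) : ‖Complex.exp (Complex.I * (k : ℂ) * (t : ℂ))‖ = 1 := by
  rw [show Complex.I * (k : ℂ) * (t : ℂ) = ((k * t : ℝ) : ℂ) * Complex.I by push_cast; ring,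
    Complex.norm_exp_ofReal_mul_I]

lemma helper_cexp_add (k t X : ℝ) :
    Complex.exp (Complex.I * (k : ℂ) * ((t + X : ℝ) : ℂ)) =
      Complex.exp (Complex.I * (k : ℂ) * (t : ℂ)) *
        Complex.exp (Complex.I * (k : ℂ) * (X : ℂ)) := by
  rw [← Complex.exp_add]
  congr 1
  push_cast
  ring

/-- for `0 ≤ γ+2p < 1` and `W` locally bounded, measurable, even,
with `|W(Y)| ≤ C e^{(γ/2+p)|Y|}`, the double integral defining `Ψ(k;W)` is absolutely
convergent and `B(1, e^{ik·};W)(X) + B(e^{ik·}, 1;W)(X) = Ψ(k;W) e^{ikX}` for all `k, X`. -/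
theorem stmt_6 (γ p : ℝ) (h0 : 0 ≤ γ + 2 * p) (h1 : γ + 2 * p < 1)
    (W : ℝ → ℝ) (hWmeas : Measurable W)
    (hWloc : ∀ r : ℝ, ∃ M : ℝ, ∀ Y ∈ Set.Icc (-r) r, |W Y| ≤ M)
    (hWsym : ∀ Y : ℝ, W Y = W (-Y))
    (C : ℝ) (hW : ∀ Y : ℝ, |W Y| ≤ C * Real.exp ((γ / 2 + p) * |Y|)) :
    ∀ k : ℝ,
      ((∫⁻ Y in Set.Iio (0 : ℝ), ∫⁻ Z in Set.Ioi (Real.log (1 - Real.exp Y)),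
        ENNReal.ofReal ‖((Real.exp ((Y - Z) / 2) * W (Y - Z) : ℝ) : ℂ) *
          (Complex.exp (Complex.I * (k : ℂ) * (Y : ℂ)) +
            Complex.exp (Complex.I * (k : ℂ) * (Z : ℂ)))‖) < ⊤) ∧
      ∀ X : ℝ,
        coagBc W (fun _ => 1) (fun Y => Complex.exp (Complex.I * (k : ℂ) * (Y : ℂ))) X +
          coagBc W (fun Y => Complex.exp (Complex.I * (k : ℂ) * (Y : ℂ))) (fun _ => 1) X =
        coagPsi W k * Complex.exp (Complex.I * (k : ℂ) * (X : ℂ)) := by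
  intro k
  set β₁ : ℝ := 1 / 2 + (γ / 2 + p) with hβ₁def
  set β₂ : ℝ := 1 / 2 - (γ / 2 + p) with hβ₂def
  have hβ₁0 : 0 < β₁ := by rw [hβ₁def]; linarith
  have hβ₁1 : β₁ < 1 := by rw [hβ₁def]; linarith
  have hβ₂0 : 0 < β₂ := by rw [hβ₂def]; linarith
  have hβ₂1 : β₂ < 1 := by rw [hβ₂def]; linarith
  have hC : 0 ≤ C := by
    have h := hW 0
    simp only [abs_zero, mul_zero, Real.exp_zero, mul_one] at h
    exact le_trans (abs_nonneg _) h
  have hWb : ∀ u : ℝ, Real.exp (u / 2) * |W u| ≤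
      C * Real.exp (β₁ * u) + C * Real.exp (β₂ * u) := by
    intro u
    have h := mul_le_mul_of_nonneg_left (hW u) (Real.exp_pos (u / 2)).le
    rcases le_total 0 u with hu | hu
    · rw [abs_of_nonneg hu] at h
      calc Real.exp (u / 2) * |W u|
          ≤ Real.exp (u / 2) * (C * Real.exp ((γ / 2 + p) * u)) := h
        _ = C * (Real.exp (u / 2) * Real.exp ((γ / 2 + p) * u)) := by ring
        _ = C * Real.exp (β₁ * u) := by rw [← Real.exp_add, hβ₁def]; ring_nf
        _ ≤ C * Real.exp (β₁ * u) + C * Real.exp (β₂ * u) :=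
            le_add_of_nonneg_right (by positivity)
    · rw [abs_of_nonpos hu] at h
      calc Real.exp (u / 2) * |W u|
          ≤ Real.exp (u / 2) * (C * Real.exp ((γ / 2 + p) * -u)) := h
        _ = C * (Real.exp (u / 2) * Real.exp ((γ / 2 + p) * -u)) := by ring
        _ = C * Real.exp (β₂ * u) := by rw [← Real.exp_add, hβ₂def]; ring_nf
        _ ≤ C * Real.exp (β₁ * u) + C * Real.exp (β₂ * u) :=
            le_add_of_nonneg_left (by positivity)
  -- the dominating function for the outer integral
  have hg : IntegrableOn (fun Y => C / β₁ * Real.exp (β₁ * (Y - Real.log (1 - Real.exp Y)))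
      + C / β₂ * Real.exp (β₂ * (Y - Real.log (1 - Real.exp Y)))) (Iio 0) :=
    ((helper_g_intOn β₁ hβ₁0 hβ₁1).const_mul (C / β₁)).add
      ((helper_g_intOn β₂ hβ₂0 hβ₂1).const_mul (C / β₂))
  -- inner integrability facts
  have hint1 : ∀ Y : ℝ, IntegrableOn (fun Z =>
      ((Real.exp ((Y - Z) / 2) * W (Y - Z) : ℝ) : ℂ) *
        Complex.exp (Complex.I * (k : ℂ) * (Y : ℂ))) (Ioi (Real.log (1 - Real.exp Y))) :=
    fun Y => (helper_inner W hWmeas C β₁ β₂ hβ₁0 hβ₂0 hWb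
      (fun _ => Complex.exp (Complex.I * (k : ℂ) * (Y : ℂ))) measurable_const 1
      (fun _ => le_of_eq (helper_norm_cexp k Y)) Y _).1
  have hmeasZ : Measurable fun Z : ℝ => Complex.exp (Complex.I * (k : ℂ) * (Z : ℂ)) :=
    Complex.measurable_exp.comp (measurable_const.mul Complex.measurable_ofReal)
  have hint2 : ∀ Y : ℝ, IntegrableOn (fun Z =>
      ((Real.exp ((Y - Z) / 2) * W (Y - Z) : ℝ) : ℂ) *
        Complex.exp (Complex.I * (k : ℂ) * (Z : ℂ))) (Ioi (Real.log (1 - Real.exp Y))) :=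
    fun Y => (helper_inner W hWmeas C β₁ β₂ hβ₁0 hβ₂0 hWb
      (fun Z => Complex.exp (Complex.I * (k : ℂ) * (Z : ℂ))) hmeasZ 1
      (fun Z => le_of_eq (helper_norm_cexp k Z)) Y _).1
  -- integrability of the two partial outer integrands
  have hA1 : IntegrableOn (fun Y => ∫ Z in Ioi (Real.log (1 - Real.exp Y)),
      ((Real.exp ((Y - Z) / 2) * W (Y - Z) : ℝ) : ℂ) *
        Complex.exp (Complex.I * (k : ℂ) * (Y : ℂ))) (Iio 0) := by
    refine Integrable.mono' hg ((helper_meas W hWmeas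
      (fun q => Complex.exp (Complex.I * (k : ℂ) * (q.1 : ℂ)))
      (Complex.measurable_exp.comp (measurable_const.mul
        (Complex.measurable_ofReal.comp measurable_fst)))).aestronglyMeasurable) ?_
    refine Filter.Eventually.of_forall fun Y => ?_
    have := (helper_inner W hWmeas C β₁ β₂ hβ₁0 hβ₂0 hWb
      (fun _ => Complex.exp (Complex.I * (k : ℂ) * (Y : ℂ))) measurable_const 1
      (fun _ => le_of_eq (helper_norm_cexp k Y)) Y (Real.log (1 - Real.exp Y))).2
    simpa using this
  have hA2 : IntegrableOn (fun Y => ∫ Z in Ioi (Real.log (1 - Real.exp Y)),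
      ((Real.exp ((Y - Z) / 2) * W (Y - Z) : ℝ) : ℂ) *
        Complex.exp (Complex.I * (k : ℂ) * (Z : ℂ))) (Iio 0) := by
    refine Integrable.mono' hg ((helper_meas W hWmeas
      (fun q => Complex.exp (Complex.I * (k : ℂ) * (q.2 : ℂ)))
      (Complex.measurable_exp.comp (measurable_const.mul
        (Complex.measurable_ofReal.comp measurable_snd)))).aestronglyMeasurable) ?_
    refine Filter.Eventually.of_forall fun Y => ?_
    have := (helper_inner W hWmeas C β₁ β₂ hβ₁0 hβ₂0 hWb
      (fun Z => Complex.exp (Complex.I * (k : ℂ) * (Z : ℂ))) hmeasZ 1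
      (fun Z => le_of_eq (helper_norm_cexp k Z)) Y (Real.log (1 - Real.exp Y))).2
    simpa using this
  constructor
  · -- finiteness of the double lintegral
    have hpoint : ∀ Y : ℝ, (∫⁻ Z in Set.Ioi (Real.log (1 - Real.exp Y)),
        ENNReal.ofReal ‖((Real.exp ((Y - Z) / 2) * W (Y - Z) : ℝ) : ℂ) *
          (Complex.exp (Complex.I * (k : ℂ) * (Y : ℂ)) +
            Complex.exp (Complex.I * (k : ℂ) * (Z : ℂ)))‖) ≤
        ENNReal.ofReal (2 * (C / β₁ * Real.exp (β₁ * (Y - Real.log (1 - Real.exp Y)))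
          + C / β₂ * Real.exp (β₂ * (Y - Real.log (1 - Real.exp Y))))) := by
      intro Y
      obtain ⟨hD2, hD2val⟩ := helper_D (2 * C) β₁ β₂ Y (Real.log (1 - Real.exp Y)) hβ₁0 hβ₂0
      calc (∫⁻ Z in Set.Ioi (Real.log (1 - Real.exp Y)),
          ENNReal.ofReal ‖((Real.exp ((Y - Z) / 2) * W (Y - Z) : ℝ) : ℂ) *
            (Complex.exp (Complex.I * (k : ℂ) * (Y : ℂ)) +
              Complex.exp (Complex.I * (k : ℂ) * (Z : ℂ)))‖)
          ≤ ∫⁻ Z in Set.Ioi (Real.log (1 - Real.exp Y)),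
            ENNReal.ofReal (2 * C * Real.exp (β₁ * (Y - Z))
              + 2 * C * Real.exp (β₂ * (Y - Z))) := by
            refine lintegral_mono fun Z => ENNReal.ofReal_le_ofReal ?_
            rw [norm_mul]
            have hf := helper_normf W C β₁ β₂ hWb Y Z
            have he : ‖Complex.exp (Complex.I * (k : ℂ) * (Y : ℂ)) +
                Complex.exp (Complex.I * (k : ℂ) * (Z : ℂ))‖ ≤ 2 := by
              refine le_trans (norm_add_le _ _) ?_
              rw [helper_norm_cexp, helper_norm_cexp]; norm_num
            calc ‖((Real.exp ((Y - Z) / 2) * W (Y - Z) : ℝ) : ℂ)‖ *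
                ‖Complex.exp (Complex.I * (k : ℂ) * (Y : ℂ)) +
                  Complex.exp (Complex.I * (k : ℂ) * (Z : ℂ))‖
                ≤ (C * Real.exp (β₁ * (Y - Z)) + C * Real.exp (β₂ * (Y - Z))) * 2 :=
                  mul_le_mul hf he (norm_nonneg _) (le_trans (norm_nonneg _) hf)
              _ = 2 * C * Real.exp (β₁ * (Y - Z)) + 2 * C * Real.exp (β₂ * (Y - Z)) := by ring
        _ = ENNReal.ofReal (∫ Z in Ioi (Real.log (1 - Real.exp Y)),
              (2 * C * Real.exp (β₁ * (Y - Z)) + 2 * C * Real.exp (β₂ * (Y - Z)))) :=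
            (ofReal_integral_eq_lintegral_ofReal hD2
              (Filter.Eventually.of_forall fun Z => by positivity)).symm
        _ ≤ ENNReal.ofReal (2 * (C / β₁ * Real.exp (β₁ * (Y - Real.log (1 - Real.exp Y)))
              + C / β₂ * Real.exp (β₂ * (Y - Real.log (1 - Real.exp Y))))) := by
            rw [hD2val]
            exact ENNReal.ofReal_le_ofReal (by ring_nf; exact le_refl _)
    calc (∫⁻ Y in Set.Iio (0 : ℝ), ∫⁻ Z in Set.Ioi (Real.log (1 - Real.exp Y)),
        ENNReal.ofReal ‖((Real.exp ((Y - Z) / 2) * W (Y - Z) : ℝ) : ℂ) *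
          (Complex.exp (Complex.I * (k : ℂ) * (Y : ℂ)) +
            Complex.exp (Complex.I * (k : ℂ) * (Z : ℂ)))‖)
        ≤ ∫⁻ Y in Set.Iio (0 : ℝ),
          ENNReal.ofReal (2 * (C / β₁ * Real.exp (β₁ * (Y - Real.log (1 - Real.exp Y)))
            + C / β₂ * Real.exp (β₂ * (Y - Real.log (1 - Real.exp Y))))) :=
          lintegral_mono fun Y => hpoint Y
      _ = ENNReal.ofReal (∫ Y in Iio (0 : ℝ),
            2 * (C / β₁ * Real.exp (β₁ * (Y - Real.log (1 - Real.exp Y)))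
              + C / β₂ * Real.exp (β₂ * (Y - Real.log (1 - Real.exp Y))))) :=
          (ofReal_integral_eq_lintegral_ofReal (hg.const_mul 2)
            (Filter.Eventually.of_forall fun Y => by positivity)).symm
      _ < ⊤ := ENNReal.ofReal_lt_top
  · -- the identity
    intro X
    have hB1 : coagBc W (fun _ => 1)
        (fun Y => Complex.exp (Complex.I * (k : ℂ) * (Y : ℂ))) X =
        (∫ Y in Iio (0:ℝ), ∫ Z in Ioi (Real.log (1 - Real.exp Y)),
          ((Real.exp ((Y - Z) / 2) * W (Y - Z) : ℝ) : ℂ) *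
            Complex.exp (Complex.I * (k : ℂ) * (Z : ℂ))) *
          Complex.exp (Complex.I * (k : ℂ) * (X : ℂ)) := by
      rw [helper_coagBc_shift, ← integral_mul_const]
      refine setIntegral_congr_fun measurableSet_Iio fun Y _ => ?_
      rw [← integral_mul_const]
      refine setIntegral_congr_fun measurableSet_Ioi fun Z _ => ?_
      simp only [helper_cexp_add]
      ring
    have hB2 : coagBc W (fun Y => Complex.exp (Complex.I * (k : ℂ) * (Y : ℂ)))
        (fun _ => 1) X =
        (∫ Y in Iio (0:ℝ), ∫ Z in Ioi (Real.log (1 - Real.exp Y)),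
          ((Real.exp ((Y - Z) / 2) * W (Y - Z) : ℝ) : ℂ) *
            Complex.exp (Complex.I * (k : ℂ) * (Y : ℂ))) *
          Complex.exp (Complex.I * (k : ℂ) * (X : ℂ)) := by
      rw [helper_coagBc_shift, ← integral_mul_const]
      refine setIntegral_congr_fun measurableSet_Iio fun Y _ => ?_
      rw [← integral_mul_const]
      refine setIntegral_congr_fun measurableSet_Ioi fun Z _ => ?_
      simp only [helper_cexp_add]
      ring
    have hPsi : coagPsi W k =
        (∫ Y in Iio (0:ℝ), ∫ Z in Ioi (Real.log (1 - Real.exp Y)),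
          ((Real.exp ((Y - Z) / 2) * W (Y - Z) : ℝ) : ℂ) *
            Complex.exp (Complex.I * (k : ℂ) * (Y : ℂ))) +
        (∫ Y in Iio (0:ℝ), ∫ Z in Ioi (Real.log (1 - Real.exp Y)),
          ((Real.exp ((Y - Z) / 2) * W (Y - Z) : ℝ) : ℂ) *
            Complex.exp (Complex.I * (k : ℂ) * (Z : ℂ))) := by
      unfold coagPsi
      rw [← integral_add hA1 hA2]
      refine setIntegral_congr_fun measurableSet_Iio fun Y _ => ?_
      rw [← integral_add (hint1 Y) (hint2 Y)]
      refine setIntegral_congr_fun measurableSet_Ioi fun Z _ => ?_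
      ring
    rw [hB1, hB2, hPsi]
    ring
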